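/- arXiv:1411.0985 — 3 statements merged into one kernel-verified Lean document; each statement's English description precedes it below -/
import Mathlib

section
/- For an odd prime p, the nonabelian group of order p³ and exponent p is morphic. -/
/-- A group is morphic if for every pair of normal subgroups `N₁, N₂`,
`G/N₁ ≅ N₂` holds if and only if `G/N₂ ≅ N₁`. -/
def IsMorphic (G : Type*) [Group G] : Prop :=
  ∀ N₁ N₂ : Subgroup G, ∀ _h₁ : N₁.Normal, ∀ _h₂ : N₂.Normal,
    (Nonempty ((G ⧸ N₁) ≃* N₂) ↔ Nonempty ((G ⧸ N₂) ≃* N₁))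

/-- The Heisenberg group over `ZMod p`: for `p` an odd prime this is the
nonabelian group of order `p ^ 3` and exponent `p`. -/
@[ext]
structure Heisenberg (p : ℕ) where
  x : ZMod p
  y : ZMod p
  z : ZMod p

namespace Heisenberg

variable {p : ℕ}

instance : Mul (Heisenberg p) :=
  ⟨fun a b => ⟨a.x + b.x, a.y + b.y, a.z + b.z + a.x * b.y⟩⟩

instance : One (Heisenberg p) := ⟨⟨0, 0, 0⟩⟩

instance : Inv (Heisenberg p) := ⟨fun a => ⟨-a.x, -a.y, -a.z + a.x * a.y⟩⟩

theorem mul_def (a b : Heisenberg p) :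
    a * b = ⟨a.x + b.x, a.y + b.y, a.z + b.z + a.x * b.y⟩ := rfl

theorem one_def : (1 : Heisenberg p) = ⟨0, 0, 0⟩ := rfl

theorem inv_def (a : Heisenberg p) : a⁻¹ = ⟨-a.x, -a.y, -a.z + a.x * a.y⟩ := rfl

instance : Group (Heisenberg p) where
  mul_assoc a b c := by ext <;> simp [mul_def] <;> ring
  one_mul a := by ext <;> simp [mul_def, one_def]
  mul_one a := by ext <;> simp [mul_def, one_def]
  inv_mul_cancel a := by ext <;> simp [mul_def, one_def, inv_def] <;> ring

end Heisenberg

/-!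
If `G / N₁ ≅ N₂` with `|G| = p³`, then `|N₁| · |N₂| = p³`, so `G / N₂` and `N₁` have the same
order. Unless `N₁ = G` (and then `N₂ = 1`), this order divides `p²`, so both groups are abelian;
having exponent dividing `p` they are `𝔽_p`-vector spaces of the same dimension, hence isomorphic.
The Heisenberg group has exponent `p` because `(x, y, z)ⁿ = (n x, n y, n z + C(n, 2) x y)` and
`p ∣ C(p, 2)` for odd `p`.
-/

theorem Module.nonempty_linearEquiv_of_natCard_eq {K V W : Type*} [Field K] [Finite K]
    [AddCommGroup V] [Module K V] [Module.Finite K V]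
    [AddCommGroup W] [Module K W] [Module.Finite K W]
    (h : Nat.card V = Nat.card W) : Nonempty (V ≃ₗ[K] W) := by
  rw [Module.natCard_eq_pow_finrank (K := K) (V := V),
    Module.natCard_eq_pow_finrank (K := K) (V := W)] at h
  exact FiniteDimensional.nonempty_linearEquiv_of_finrank_eq
    (Nat.pow_right_injective Finite.one_lt_card h)

section PrimeExponent

variable {p : ℕ} [Fact p.Prime]

theorem CommGroup.nonempty_mulEquiv_of_exponent_dvd_prime {K₁ K₂ : Type*}
    [CommGroup K₁] [CommGroup K₂] [Finite K₁] [Finite K₂]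
    (h₁ : Monoid.exponent K₁ ∣ p) (h₂ : Monoid.exponent K₂ ∣ p)
    (h : Nat.card K₁ = Nat.card K₂) : Nonempty (K₁ ≃* K₂) := by
  have : Module (ZMod p) (Additive K₁) := AddCommGroup.zmodModule fun x =>
    congrArg Additive.ofMul (Monoid.exponent_dvd_iff_forall_pow_eq_one.mp h₁ x.toMul)
  have : Module (ZMod p) (Additive K₂) := AddCommGroup.zmodModule fun x =>
    congrArg Additive.ofMul (Monoid.exponent_dvd_iff_forall_pow_eq_one.mp h₂ x.toMul)
  obtain ⟨e⟩ := Module.nonempty_linearEquiv_of_natCard_eq (K := ZMod p)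
    (V := Additive K₁) (W := Additive K₂) h
  exact ⟨MulEquiv.toAdditive.symm e.toAddEquiv⟩

theorem isMulCommutative_of_card_dvd_prime_sq {G : Type*} [Group G]
    (h : Nat.card G ∣ p ^ 2) : IsMulCommutative G := by
  obtain ⟨k, hk, hG⟩ := (Nat.dvd_prime_pow (Fact.out : p.Prime)).mp h
  rcases (by omega : k ≤ 1 ∨ k = 2) with hk | rfl
  · have := isCyclic_of_card_dvd_prime (α := G) (p := p)
      (hG ▸ (pow_dvd_pow p hk).trans (pow_one p).dvd)
    infer_instance
  · exact IsPGroup.isMulCommutative_of_card_eq_prime_sq hG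

open scoped IsMulCommutative in
theorem nonempty_mulEquiv_of_card_dvd_prime_sq {K₁ K₂ : Type*} [Group K₁] [Group K₂]
    (h₁ : Monoid.exponent K₁ ∣ p) (h₂ : Monoid.exponent K₂ ∣ p)
    (h : Nat.card K₁ = Nat.card K₂) (hdvd : Nat.card K₁ ∣ p ^ 2) : Nonempty (K₁ ≃* K₂) := by
  have hpos : Nat.card K₁ ≠ 0 := ne_zero_of_dvd_ne_zero (pow_ne_zero 2 (NeZero.ne p)) hdvd
  have := Nat.finite_of_card_ne_zero hpos
  have := Nat.finite_of_card_ne_zero (h ▸ hpos)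
  have := isMulCommutative_of_card_dvd_prime_sq hdvd
  have := isMulCommutative_of_card_dvd_prime_sq (h ▸ hdvd)
  exact CommGroup.nonempty_mulEquiv_of_exponent_dvd_prime h₁ h₂ h

theorem nonempty_quotient_mulEquiv_swap {G : Type*} [Group G]
    (hG : Nat.card G = p ^ 3) (hexp : Monoid.exponent G ∣ p)
    {N₁ N₂ : Subgroup G} [N₁.Normal] [N₂.Normal] (e : G ⧸ N₁ ≃* N₂) :
    Nonempty (G ⧸ N₂ ≃* N₁) := by
  have := Nat.finite_of_card_ne_zero (hG ▸ pow_ne_zero 3 (NeZero.ne p))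
  have hprod : Nat.card N₁ * Nat.card N₂ = p ^ 3 := by
    rw [← hG, N₁.card_eq_card_quotient_mul_card_subgroup, Nat.card_congr e.toEquiv, mul_comm]
  have hquot : Nat.card (G ⧸ N₂) = Nat.card N₁ := by
    refine Nat.eq_of_mul_eq_mul_right (Nat.card_pos (α := N₂)) ?_
    rw [← N₂.card_eq_card_quotient_mul_card_subgroup, hG, hprod]
  obtain ⟨k, hk, hN₁⟩ := (Nat.dvd_prime_pow (Fact.out : p.Prime)).mp (Dvd.intro _ hprod)
  rcases (by omega : k ≤ 2 ∨ k = 3) with hk | rfl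
  · refine nonempty_mulEquiv_of_card_dvd_prime_sq
      ((Group.exponent_quotient_dvd N₂).trans hexp)
      ((Monoid.exponent_dvd_of_monoidHom N₁.subtype N₁.subtype_injective).trans hexp)
      hquot ?_
    rw [hquot, hN₁]
    exact pow_dvd_pow p hk
  · obtain rfl : N₁ = ⊤ := Subgroup.eq_top_of_card_eq _ (hN₁.trans hG.symm)
    rw [hN₁] at hprod
    obtain rfl : N₂ = ⊥ :=
      Subgroup.card_eq_one.mp ((Nat.mul_eq_left (pow_ne_zero 3 (NeZero.ne p))).mp hprod)
    exact ⟨QuotientGroup.quotientBot.trans Subgroup.topEquiv.symm⟩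

theorem isMorphic_of_card_eq_prime_pow_three {G : Type*} [Group G]
    (hG : Nat.card G = p ^ 3) (hexp : Monoid.exponent G ∣ p) : IsMorphic G :=
  fun _ _ _ _ => ⟨fun ⟨e⟩ => nonempty_quotient_mulEquiv_swap hG hexp e,
    fun ⟨e⟩ => nonempty_quotient_mulEquiv_swap hG hexp e⟩

end PrimeExponent

namespace Heisenberg

variable {p : ℕ}

theorem pow_eq (a : Heisenberg p) (n : ℕ) :
    a ^ n = ⟨n * a.x, n * a.y, n * a.z + n.choose 2 * (a.x * a.y)⟩ := by
  induction n with
  | zero => ext <;> simp [one_def]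
  | succ n ih =>
    rw [pow_succ, ih]
    ext <;> simp [mul_def, Nat.choose_succ_succ] <;> ring

theorem exponent_dvd_of_odd (hodd : Odd p) : Monoid.exponent (Heisenberg p) ∣ p := by
  have hchoose : ((p.choose 2 : ℕ) : ZMod p) = 0 := by
    obtain ⟨k, rfl⟩ := hodd
    rw [Nat.choose_two_right, ZMod.natCast_eq_zero_iff]
    exact ⟨k, Nat.div_eq_of_eq_mul_left two_pos (by rw [Nat.add_sub_cancel]; ring)⟩
  refine Monoid.exponent_dvd_of_forall_pow_eq_one fun a => ?_
  ext <;> simp [pow_eq, one_def, hchoose]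

theorem natCard_eq : Nat.card (Heisenberg p) = p ^ 3 := by
  let e : Heisenberg p ≃ ZMod p × ZMod p × ZMod p :=
    ⟨fun a => (a.x, a.y, a.z), fun t => ⟨t.1, t.2.1, t.2.2⟩, fun _ => rfl, fun _ => rfl⟩
  rw [Nat.card_congr e, Nat.card_prod, Nat.card_prod, Nat.card_zmod]
  ring

end Heisenberg

/-- For an odd prime `p`, the nonabelian group of order `p ^ 3` and exponent `p`
(the Heisenberg group over `𝔽_p`) is morphic. -/
theorem heisenberg_isMorphic (p : ℕ) (hp : p.Prime) (hodd : Odd p) :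
    IsMorphic (Heisenberg p) :=
  have : Fact p.Prime := ⟨hp⟩
  isMorphic_of_card_eq_prime_pow_three Heisenberg.natCard_eq (Heisenberg.exponent_dvd_of_odd hodd)
end

section
/- In a finite morphic p-group, all maximal subgroups are isomorphic. -/
lemma prime_dvd_card_of_pGroup {p : ℕ} (hp : p.Prime) {H : Type*} [Group H] [Finite H]
    [Nontrivial H] (h : IsPGroup p H) : p ∣ Nat.card H := by
  haveI : Fact p.Prime := ⟨hp⟩
  obtain ⟨n, hn⟩ := IsPGroup.iff_card.mp h
  rcases Nat.eq_zero_or_pos n with rfl | hn0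
  · simp at hn
    exact absurd hn (Finite.one_lt_card).ne'
  · rw [hn]
    exact dvd_pow_self p hn0.ne'

lemma card_quot_coatom {p : ℕ} (hp : p.Prime) {G : Type*} [Group G] [Finite G]
    (hpG : IsPGroup p G) (M : Subgroup G) [M.Normal] (h : IsCoatom M) :
    Nat.card (G ⧸ M) = p := by
  haveI : Fact p.Prime := ⟨hp⟩
  have hq : IsPGroup p (G ⧸ M) := hpG.to_quotient M
  have hnt : Nontrivial (G ⧸ M) := by
    rw [← Finite.one_lt_card_iff_nontrivial]
    have h0 : Nat.card (G ⧸ M) ≠ 0 := Nat.card_pos.ne'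
    have h1 : Nat.card (G ⧸ M) ≠ 1 := fun he => h.1 (Subgroup.index_eq_one.mp he)
    omega
  obtain ⟨x, hx⟩ := exists_prime_orderOf_dvd_card' (G := G ⧸ M) p
    (prime_dvd_card_of_pGroup hp hq)
  -- the preimage of ⟨x⟩ strictly contains M, hence is ⊤
  obtain ⟨y, hy⟩ := QuotientGroup.mk'_surjective M x
  have hMK : M < (Subgroup.zpowers x).comap (QuotientGroup.mk' M) := by
    refine lt_of_le_of_ne (fun m hm => ?_) (fun hEq => ?_)
    · rw [Subgroup.mem_comap]
      have hm1 : QuotientGroup.mk' M m = 1 := (QuotientGroup.eq_one_iff m).mpr hm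
      rw [hm1]; exact one_mem _
    · have hyK : y ∈ (Subgroup.zpowers x).comap (QuotientGroup.mk' M) := by
        simp [Subgroup.mem_comap, hy, Subgroup.mem_zpowers]
      rw [← hEq] at hyK
      have : x = 1 := by rw [← hy]; exact (QuotientGroup.eq_one_iff y).mpr hyK
      rw [this, orderOf_one] at hx
      exact hp.one_lt.ne hx
  have hKtop := h.2 _ hMK
  have hztop : Subgroup.zpowers x = ⊤ := by
    rw [eq_top_iff]
    intro z _
    obtain ⟨w, hw⟩ := QuotientGroup.mk'_surjective M z
    have : w ∈ (Subgroup.zpowers x).comap (QuotientGroup.mk' M) := hKtop ▸ Subgroup.mem_top w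
    rw [Subgroup.mem_comap, hw] at this
    exact this
  calc Nat.card (G ⧸ M) = Nat.card (⊤ : Subgroup (G ⧸ M)) := (Subgroup.card_top).symm
    _ = Nat.card (Subgroup.zpowers x) := by rw [hztop]
    _ = orderOf x := Nat.card_zpowers x
    _ = p := hx

/-- In a finite morphic `p`-group, all maximal subgroups are isomorphic. -/
theorem maximal_subgroups_isomorphic (p : ℕ) (hp : p.Prime) (G : Type*) [Group G] [Finite G]
    (hpG : IsPGroup p G) (hG : IsMorphic G)
    (M₁ M₂ : Subgroup G) (h₁ : IsCoatom M₁) (h₂ : IsCoatom M₂) :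
    Nonempty (M₁ ≃* M₂) := by
  haveI : Fact p.Prime := ⟨hp⟩
  -- G is nontrivial
  haveI : Nontrivial G := by
    by_contra hcon
    haveI : Subsingleton G := not_nontrivial_iff_subsingleton.mp hcon
    exact h₁.1 (Subsingleton.elim _ _)
  -- a central element of order p
  haveI := IsPGroup.center_nontrivial hpG
  obtain ⟨g, hg⟩ := exists_prime_orderOf_dvd_card' (G := Subgroup.center G) p
    (prime_dvd_card_of_pGroup hp (hpG.to_subgroup (Subgroup.center G)))
  set Z : Subgroup G := Subgroup.zpowers (g : G) with hZ
  haveI hZnormal : Z.Normal := by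
    constructor
    intro n hn x
    obtain ⟨k, hk⟩ := hn
    simp only at hk
    have hc : Commute x (g : G) := Subgroup.mem_center_iff.mp g.2 x
    have hxn : x * n * x⁻¹ = n := by
      rw [← hk, (hc.zpow_right k).eq, mul_assoc, mul_inv_cancel, mul_one]
    rw [hxn]; exact ⟨k, hk⟩
  have hZcard : Nat.card Z = p := by
    rw [hZ, Nat.card_zpowers, Subgroup.orderOf_coe, hg]
  -- normality of maximal subgroups
  haveI hnil : Group.IsNilpotent G := hpG.isNilpotent
  haveI hn₁ : M₁.Normal := Subgroup.NormalizerCondition.normal_of_coatom M₁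
    (normalizerCondition_of_isNilpotent (G := G)) h₁
  haveI hn₂ : M₂.Normal := Subgroup.NormalizerCondition.normal_of_coatom M₂
    (normalizerCondition_of_isNilpotent (G := G)) h₂
  have hc₁ : Nat.card (G ⧸ M₁) = p := card_quot_coatom hp hpG M₁ h₁
  have hc₂ : Nat.card (G ⧸ M₂) = p := card_quot_coatom hp hpG M₂ h₂
  haveI : IsCyclic (G ⧸ M₁) := isCyclic_of_prime_card hc₁
  haveI : IsCyclic (G ⧸ M₂) := isCyclic_of_prime_card hc₂
  haveI : IsCyclic Z := isCyclic_of_prime_card hZcard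
  have e₁ : Nonempty ((G ⧸ M₁) ≃* Z) := ⟨mulEquivOfCyclicCardEq (hc₁.trans hZcard.symm)⟩
  have e₂ : Nonempty ((G ⧸ M₂) ≃* Z) := ⟨mulEquivOfCyclicCardEq (hc₂.trans hZcard.symm)⟩
  obtain ⟨f₁⟩ := (hG M₁ Z hn₁ hZnormal).mp e₁
  obtain ⟨f₂⟩ := (hG M₂ Z hn₂ hZnormal).mp e₂
  exact ⟨f₁.symm.trans f₂⟩
end

section
/- A finite abelian morphic p-group is homocyclic. -/
open Multiplicative

section Transfer

variable {G H : Type*} [Group G] [Group H]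

theorem MulEquiv.nonempty_quotient_comap_mulEquiv_comap_iff (e : G ≃* H) (N₁ N₂ : Subgroup H)
    [N₁.Normal] :
    Nonempty ((G ⧸ N₁.comap e.toMonoidHom) ≃* N₂.comap e.toMonoidHom) ↔
      Nonempty ((H ⧸ N₁) ≃* N₂) := by
  have q : (G ⧸ N₁.comap e.toMonoidHom) ≃* H ⧸ N₁ :=
    QuotientGroup.congr _ _ e (Subgroup.map_comap_eq_self_of_surjective e.surjective _)
  have s : N₂.comap e.toMonoidHom ≃* N₂ :=
    (e.subgroupMap _).trans
      (MulEquiv.subgroupCongr (Subgroup.map_comap_eq_self_of_surjective e.surjective _))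
  exact Nonempty.congr (fun f => q.symm.trans (f.trans s)) (fun f => q.trans (f.trans s.symm))

theorem IsMorphic.of_mulEquiv (hG : IsMorphic G) (e : G ≃* H) : IsMorphic H := by
  intro N₁ N₂ h₁ h₂
  have := hG (N₁.comap e.toMonoidHom) (N₂.comap e.toMonoidHom) (h₁.comap _) (h₂.comap _)
  rwa [e.nonempty_quotient_comap_mulEquiv_comap_iff, e.nonempty_quotient_comap_mulEquiv_comap_iff]
    at this

end Transfer

section PowEqOne

variable {n : ℕ}

theorem MulEquiv.card_subtype_pow_eq_one {G H : Type*} [Monoid G] [Monoid H] (e : G ≃* H) :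
    Nat.card {g : G // g ^ n = 1} = Nat.card {h : H // h ^ n = 1} :=
  Nat.card_congr <| e.toEquiv.subtypeEquiv fun g => by
    rw [MulEquiv.toEquiv_eq_coe, EquivLike.coe_coe, ← map_pow, MulEquiv.map_eq_one_iff]

theorem Nat.card_subtype_prod_pow_eq_one {A B : Type*} [Monoid A] [Monoid B] :
    Nat.card {x : A × B // x ^ n = 1} =
      Nat.card {a : A // a ^ n = 1} * Nat.card {b : B // b ^ n = 1} :=
  (Nat.card_congr <| (Equiv.subtypeEquivRight fun _ => Prod.ext_iff).trans
    (Equiv.subtypeProdEquivProd (p := fun a : A => a ^ n = 1) (q := fun b : B => b ^ n = 1))).trans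
    (Nat.card_prod _ _)

theorem Subgroup.card_subtype_pow_eq_one_of_forall_mem {G : Type*} [Group G] (N : Subgroup G)
    (hN : ∀ g : G, g ^ n = 1 → g ∈ N) :
    Nat.card {x : N // x ^ n = 1} = Nat.card {g : G // g ^ n = 1} :=
  Nat.card_congr
    { toFun x := ⟨x.1, by rw [← N.coe_pow, x.2, N.coe_one]⟩
      invFun g := ⟨⟨g.1, hN g.1 g.2⟩, Subtype.ext g.2⟩
      left_inv _ := rfl
      right_inv _ := rfl }

end PowEqOne

theorem MonoidHom.range_inl_eq_ker_snd (A B : Type*) [Group A] [Group B] :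
    (MonoidHom.inl A B).range = (MonoidHom.snd A B).ker := by
  ext ⟨a, b⟩
  simp [Subgroup.mem_prod, eq_comm]

theorem not_isMorphic_prod {A B : Type*} [Group A] [Group B] [Finite B] {n : ℕ} (π : B →* A)
    (hπ : Function.Surjective π) (hπn : ∀ b : B, b ^ n = 1 → π b = 1) {a : A} (ha : a ≠ 1)
    (han : a ^ n = 1) : ¬ IsMorphic (A × B) := by
  intro hmorph
  have : Finite A := Finite.of_surjective π hπ
  set N₁ := (π.comp (MonoidHom.snd A B)).ker
  set N₂ := (MonoidHom.inl A B).range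
  have hN₂ : N₂.Normal := by
    rw [show N₂ = _ from MonoidHom.range_inl_eq_ker_snd A B]; infer_instance
  have quot₁ : ((A × B) ⧸ N₁) ≃* N₂ :=
    (QuotientGroup.quotientKerEquivOfSurjective (π.comp (MonoidHom.snd A B))
      (hπ.comp Prod.snd_surjective)).trans
      (MonoidHom.ofInjective fun _ _ h => congrArg Prod.fst h)
  obtain ⟨quot₂⟩ := (hmorph N₁ N₂ inferInstance hN₂).mp ⟨quot₁⟩
  have eB : B ≃* N₁ :=
    ((QuotientGroup.quotientKerEquivOfSurjective _ Prod.snd_surjective).symm.trans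
      (QuotientGroup.quotientMulEquivOfEq (MonoidHom.range_inl_eq_ker_snd A B).symm)).trans quot₂
  have hN₁ : ∀ x : A × B, x ^ n = 1 → x ∈ N₁ := fun x hx => hπn x.2 (congrArg Prod.snd hx)
  have hcard : Nat.card {b : B // b ^ n = 1} =
      Nat.card {a : A // a ^ n = 1} * Nat.card {b : B // b ^ n = 1} :=
    calc Nat.card {b : B // b ^ n = 1}
      _ = Nat.card {x : N₁ // x ^ n = 1} := eB.card_subtype_pow_eq_one
      _ = Nat.card {x : A × B // x ^ n = 1} := N₁.card_subtype_pow_eq_one_of_forall_mem hN₁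
      _ = _ := Nat.card_subtype_prod_pow_eq_one
  have : Nontrivial {a : A // a ^ n = 1} :=
    ⟨⟨a, han⟩, ⟨1, one_pow n⟩, fun h => ha (congrArg Subtype.val h)⟩
  have : Nonempty {b : B // b ^ n = 1} := ⟨⟨1, one_pow n⟩⟩
  exact hcard.not_lt ((Nat.lt_mul_iff_one_lt_left Nat.card_pos).mpr Finite.one_lt_card)

theorem ZMod.cast_eq_zero_of_nsmul_eq_zero {p a b : ℕ} (hp : p ≠ 0) (hab : a < b)
    {x : ZMod (p ^ b)} (hx : p • x = 0) : (x.cast : ZMod (p ^ a)) = 0 := by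
  have : NeZero (p ^ b) := ⟨pow_ne_zero b hp⟩
  obtain ⟨k, rfl⟩ := Nat.exists_eq_add_of_lt hab
  have hdvd : p * p ^ (a + k) ∣ p * x.val := by
    rw [← pow_succ', ← ZMod.natCast_eq_zero_iff, Nat.cast_mul, ZMod.natCast_zmod_val,
      ← nsmul_eq_mul, hx]
  rw [← ZMod.natCast_val, ZMod.natCast_eq_zero_iff]
  exact (pow_dvd_pow p (Nat.le_add_right a k)).trans (Nat.dvd_of_mul_dvd_mul_left
    (Nat.pos_of_ne_zero hp) hdvd)

theorem not_isMorphic_pi_zmod_pow {ι : Type*} [Fintype ι] {p : ℕ} (hp : p.Prime) {E : ι → ℕ}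
    {i j : ι} (hi : 0 < E i) (hij : E i < E j) :
    ¬ IsMorphic (∀ k, Multiplicative (ZMod (p ^ E k))) := by
  classical
  have : Fact p.Prime := ⟨hp⟩
  have : ∀ k, NeZero (p ^ E k) := fun k => ⟨pow_ne_zero _ hp.ne_zero⟩
  set M := fun k => Multiplicative (ZMod (p ^ E k))
  let split : (∀ k, M k) ≃* M i × ∀ k : {k // k ≠ i}, M k :=
    { Equiv.piSplitAt i M with map_mul' _ _ := rfl }
  let j' : {k // k ≠ i} := ⟨j, by rintro rfl; exact lt_irrefl _ hij⟩
  let π : (∀ k : {k // k ≠ i}, M k) →* M i :=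
    (ZMod.castHom (pow_dvd_pow p hij.le) _).toAddMonoidHom.toMultiplicative.comp
      (Pi.evalMonoidHom _ j')
  have hπ : Function.Surjective π :=
    (ZMod.castHom_surjective (pow_dvd_pow p hij.le)).comp (Function.surjective_eval j')
  have hπp : ∀ b, b ^ p = 1 → π b = 1 := fun b hb =>
    ZMod.cast_eq_zero_of_nsmul_eq_zero hp.ne_zero hij (congrArg toAdd (congrFun hb j'))
  obtain ⟨a, ha⟩ := exists_prime_orderOf_dvd_card' (G := M i) p
    (by simpa [M, Nat.card_zmod] using dvd_pow_self p hi.ne')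
  have ha₁ : a ≠ 1 := fun h => hp.one_lt.ne' (ha ▸ h ▸ orderOf_one)
  have hap : a ^ p = 1 := orderOf_dvd_iff_pow_eq_one.mp ha.dvd
  exact fun h => not_isMorphic_prod π hπ hπp ha₁ hap (h.of_mulEquiv split)

/-- A finite abelian morphic `p`-group is homocyclic, i.e. a direct power of a single
cyclic `p`-group. -/
theorem abelian_morphic_homocyclic (p : ℕ) (hp : p.Prime) (G : Type*) [CommGroup G]
    [Finite G] (hpG : IsPGroup p G) (hG : IsMorphic G) :
    ∃ n e : ℕ, Nonempty (G ≃* (Fin n → Multiplicative (ZMod (p ^ e)))) := by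
  have : Fact p.Prime := ⟨hp⟩
  obtain ⟨ι, _, n, hn, ⟨eG⟩⟩ := CommGroup.equiv_prod_multiplicative_zmod_of_finite G
  have hpow : ∀ i, ∃ k, n i = p ^ k := fun i => by
    have : NeZero (n i) := ⟨(zero_lt_one.trans (hn i)).ne'⟩
    simpa [Nat.card_zmod] using IsPGroup.iff_card.mp <| hpG.of_surjective
      ((Pi.evalMonoidHom _ i).comp eG.toMonoidHom) ((Function.surjective_eval i).comp eG.surjective)
  choose E hE using hpow
  obtain rfl : n = fun i => p ^ E i := funext hE
  have hE₀ : ∀ i, 0 < E i := fun i => Nat.pos_of_ne_zero fun h => by simpa [h] using hn i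
  obtain ⟨e, he⟩ : ∃ e, ∀ i, E i = e := by
    rcases isEmpty_or_nonempty ι with hι | ⟨⟨i₀⟩⟩
    · exact ⟨0, isEmptyElim⟩
    refine ⟨E i₀, fun i => by_contra fun hne => ?_⟩
    rcases Ne.lt_or_gt hne with hlt | hlt
    · exact not_isMorphic_pi_zmod_pow hp (hE₀ i) hlt (hG.of_mulEquiv eG)
    · exact not_isMorphic_pi_zmod_pow hp (hE₀ i₀) hlt (hG.of_mulEquiv eG)
  obtain rfl : E = fun _ => e := funext he
  exact ⟨_, e, ⟨eG.trans (MulEquiv.arrowCongr (Fintype.equivFin ι) (MulEquiv.refl _))⟩⟩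
end
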